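/- If v is obtained from a reduced n-expression u by one application of a commutation relation s_i s_j = s_j s_i with |i-j| ≥ 2, then S(v) is obtained from S(u) by transposing the two adjacent names at the corresponding positions, which are disjoint pairs {p,q} and {p',q'}; all other names are unchanged. -/

import Mathlib

open scoped Classical

noncomputable section

/-- adjacent transposition `s i = (i, i+1)` acting on ℕ (1-indexed positions) -/
def s (i : ℕ) : Equiv.Perm ℕ := Equiv.swap i (i + 1)

/-- permutation represented by a word; letters are applied left to right
(`wperm (u ++ v) = wperm v * wperm u`, i.e. `u` first, then `v`). -/
def wperm (w : List ℕ) : Equiv.Perm ℕ := ((w.map s).reverse).prod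

/-- `w` is an `n`-expression: a word in the letters `s 1, ..., s (n-1)` -/
def IsExpr (n : ℕ) (w : List ℕ) : Prop := ∀ i ∈ w, 1 ≤ i ∧ i + 1 ≤ n

/-- set of inversions of a permutation of `{1,...,n}` -/
def invSet (n : ℕ) (π : Equiv.Perm ℕ) : Finset (ℕ × ℕ) :=
  (Finset.Icc 1 n ×ˢ Finset.Icc 1 n).filter (fun pq => pq.1 < pq.2 ∧ π pq.2 < π pq.1)

/-- a reduced `n`-expression: its length equals the inversion number of the
permutation it represents -/
def ReducedExpr (n : ℕ) (w : List ℕ) : Prop :=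
  IsExpr n w ∧ w.length = (invSet n (wperm w)).card

/-- one application of a braid relation `s i s j s i = s j s i s j`, `|i-j| = 1` -/
inductive StepI : List ℕ → List ℕ → Prop
  | mk (a b : List ℕ) (i j : ℕ) (h : i + 1 = j ∨ j + 1 = i) :
      StepI (a ++ i :: j :: i :: b) (a ++ j :: i :: j :: b)

/-- one application of a commutation relation `s i s j = s j s i`, `|i-j| ≥ 2` -/
inductive StepII : List ℕ → List ℕ → Prop
  | mk (a b : List ℕ) (i j : ℕ) (h : i + 2 ≤ j ∨ j + 2 ≤ i) :
      StepII (a ++ i :: j :: b) (a ++ j :: i :: b)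

def BraidStep (u v : List ℕ) : Prop := StepI u v ∨ StepII u v

/-- `c` is a derivation from `u` to `v` by braid relations -/
def IsDeriv (u v : List ℕ) (c : List (List ℕ)) : Prop :=
  c.Chain' BraidStep ∧ c.head? = some u ∧ c.getLast? = some v

/-- combinatorial distance: minimal number of braid relations transforming `u` into `v` -/
def dist (u v : List ℕ) : ℕ :=
  sInf {k | ∃ c, IsDeriv u v c ∧ c.length = k + 1}

/-- the word `s_{j,i} = s_{j-1} s_{j-2} ... s_i` (empty if `j ≤ i`) -/
def sji (j i : ℕ) : List ℕ := (List.range (j - i)).map (fun k => j - 1 - k)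

/-- the normal word `s_{1,f(1)} s_{2,f(2)} ... s_{n,f(n)}` -/
def normalWord (n : ℕ) (f : ℕ → ℕ) : List ℕ :=
  ((List.range n).map (fun k => sji (k + 1) (f (k + 1)))).flatten

/-- `f : {1,...,n} → {1,...,n}` with `1 ≤ f i ≤ i` for all `i` -/
def IsNormalFun (n : ℕ) (f : ℕ → ℕ) : Prop := ∀ i ∈ Finset.Icc 1 n, 1 ≤ f i ∧ f i ≤ i

/-- names of the successive crossings: the name of a letter is the pair of starting
positions of the two strands crossing there -/
def namesAux : Equiv.Perm ℕ → List ℕ → List (Finset ℕ)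
  | _, [] => []
  | π, i :: rest => ({π⁻¹ i, π⁻¹ (i + 1)} : Finset ℕ) :: namesAux (s i * π) rest

/-- the name sequence `S(w)` of a word -/
def names (w : List ℕ) : List (Finset ℕ) := namesAux 1 w

/-- two entries occur in the same relative order in `S` and `S'` -/
def sameOrder (S S' : List (Finset ℕ)) (a b : Finset ℕ) : Prop :=
  (S.idxOf a < S.idxOf b) ↔ (S'.idxOf a < S'.idxOf b)

/-- `I₃(S,S')`: number of triples `{p,q,r} ⊆ {1,...,n}` such that the relative order of
the three pairs `{p,q}, {p,r}, {q,r}` is not the same in `S` and `S'` -/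
def I3 (n : ℕ) (S S' : List (Finset ℕ)) : ℕ :=
  (((Finset.Icc 1 n).powersetCard 3).filter (fun t =>
    ¬ ∀ a ∈ t.powersetCard 2, ∀ b ∈ t.powersetCard 2, sameOrder S S' a b)).card

/-- `I₂,₂(S,S')`: number of unordered pairs of disjoint pairs in `{1,...,n}` whose
relative order is not the same in `S` and `S'` -/
def I22 (n : ℕ) (S S' : List (Finset ℕ)) : ℕ :=
  ((((Finset.Icc 1 n).powersetCard 2).powersetCard 2).filter (fun P =>
    (∀ a ∈ P, ∀ b ∈ P, a ≠ b → Disjoint a b) ∧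
    ¬ ∀ a ∈ P, ∀ b ∈ P, sameOrder S S' a b)).card

/-- total number of unordered pairs of entries whose relative order differs -/
def InvCount (S S' : List (Finset ℕ)) : ℕ :=
  ((S.toFinset.powersetCard 2).filter (fun P =>
    ¬ ∀ a ∈ P, ∀ b ∈ P, sameOrder S S' a b)).card

/-- number of type I steps in a derivation -/
def countStepsI (c : List (List ℕ)) : ℕ :=
  ((Finset.range (c.length - 1)).filter (fun k => StepI (c.getD k []) (c.getD (k + 1) []))).card

/-- number of type II steps in a derivation -/
def countStepsII (c : List (List ℕ)) : ℕ :=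
  ((Finset.range (c.length - 1)).filter (fun k => StepII (c.getD k []) (c.getD (k + 1) []))).card

/-- position of the strand starting at position `p` after the first `k` letters of `w` -/
def strandPos (w : List ℕ) (p k : ℕ) : ℕ := wperm (w.take k) p

/-- number of unit squares to the right of the `n`-th strand in the braid diagram of `w`,
drawn on an `(n-1) × length w` grid -/
def area (n : ℕ) (w : List ℕ) : ℕ :=
  ((List.range w.length).map (fun k => n - max (strandPos w n k) (strandPos w n (k + 1)))).sum

/-- `u_n = s_{1,1} s_{2,1} ... s_{n,1}` -/
def uWord (n : ℕ) : List ℕ := ((List.range n).map (fun k => sji (k + 1) 1)).flatten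

/-- `v_n = s_{n,1} s_{n,2} ... s_{n,n-1}` -/
def vWord (n : ℕ) : List ℕ := ((List.range (n - 1)).map (fun k => sji n (k + 1))).flatten


/- The commuting letters `s i`, `s j` move disjoint pairs of positions, so the strands crossing
at the second of them are not moved by the first. Hence both names are read off the
permutation reached before the pair, and after the pair both orders reach the same permutation. -/

lemma s_apply_of_far {i j : ℕ} (h : i + 2 ≤ j ∨ j + 2 ≤ i) : s i j = j :=
  Equiv.swap_apply_of_ne_of_ne (by omega) (by omega)

lemma s_apply_succ_of_far {i j : ℕ} (h : i + 2 ≤ j ∨ j + 2 ≤ i) : s i (j + 1) = j + 1 :=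
  Equiv.swap_apply_of_ne_of_ne (by omega) (by omega)

lemma s_mul_comm_of_far {i j : ℕ} (h : i + 2 ≤ j ∨ j + 2 ≤ i) : s i * s j = s j * s i := by
  ext x
  simp only [Equiv.Perm.mul_apply, s, Equiv.swap_apply_def]
  split_ifs <;> omega

lemma wperm_cons (x : ℕ) (w : List ℕ) : wperm (x :: w) = wperm w * s x := by
  simp [wperm]

lemma namesAux_length (π : Equiv.Perm ℕ) (w : List ℕ) : (namesAux π w).length = w.length := by
  induction w generalizing π with
  | nil => rfl
  | cons x w ih => simp [namesAux, ih]

lemma namesAux_append (π : Equiv.Perm ℕ) (w w' : List ℕ) :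
    namesAux π (w ++ w') = namesAux π w ++ namesAux (wperm w * π) w' := by
  induction w generalizing π with
  | nil => simp [namesAux, wperm]
  | cons x w ih => simp only [List.cons_append, namesAux, ih, wperm_cons, mul_assoc]

lemma namesAux_cons_cons_of_far (π : Equiv.Perm ℕ) (w : List ℕ) {x y : ℕ}
    (h : x + 2 ≤ y ∨ y + 2 ≤ x) :
    namesAux π (x :: y :: w) =
      {π⁻¹ x, π⁻¹ (x + 1)} :: {π⁻¹ y, π⁻¹ (y + 1)} :: namesAux (s y * s x * π) w := by
  have hinv : (s x)⁻¹ = s x := Equiv.swap_inv _ _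
  simp only [namesAux, mul_inv_rev, Equiv.Perm.mul_apply, hinv, s_apply_of_far h,
    s_apply_succ_of_far h, mul_assoc]

lemma disjoint_pair_inv_of_far (π : Equiv.Perm ℕ) {i j : ℕ} (h : i + 2 ≤ j ∨ j + 2 ≤ i) :
    Disjoint ({π⁻¹ i, π⁻¹ (i + 1)} : Finset ℕ) {π⁻¹ j, π⁻¹ (j + 1)} := by
  simp only [Finset.disjoint_insert_left, Finset.disjoint_insert_right,
    Finset.mem_insert, Finset.mem_singleton,
    Finset.disjoint_singleton_left, π⁻¹.injective.eq_iff]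
  omega

lemma names_append_cons_cons_of_far (w w' : List ℕ) {x y : ℕ} (h : x + 2 ≤ y ∨ y + 2 ≤ x) :
    names (w ++ x :: y :: w') =
      names w ++ [{(wperm w)⁻¹ x, (wperm w)⁻¹ (x + 1)}, {(wperm w)⁻¹ y, (wperm w)⁻¹ (y + 1)}] ++
        namesAux (s y * s x * wperm w) w' := by
  simp [names, namesAux_append, namesAux_cons_cons_of_far _ _ h]

theorem names_stepII_general (u v : List ℕ) (h : StepII u v) :
    ∃ (k : ℕ) (a b : Finset ℕ), Disjoint a b ∧
      names u = (names u).take k ++ [a, b] ++ (names u).drop (k + 2) ∧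
      names v = (names u).take k ++ [b, a] ++ (names u).drop (k + 2) := by
  obtain ⟨w, w', i, j, hij⟩ := h
  have hji : j + 2 ≤ i ∨ i + 2 ≤ j := hij.symm
  have hu := names_append_cons_cons_of_far w w' hij
  have hv := names_append_cons_cons_of_far w w' hji
  rw [s_mul_comm_of_far hij] at hv
  have hlen : (names w).length = w.length := namesAux_length _ _
  refine ⟨w.length, _, _, disjoint_pair_inv_of_far (wperm w) hij, ?_, ?_⟩ <;>
    simp [hu, hv, ← hlen, List.drop_append]

/-- Applying one commutation relation to a reduced `n`-expression transposes two
adjacent names, which are disjoint pairs, leaving all other names unchanged. -/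
theorem names_stepII (n : ℕ) (u v : List ℕ) (hu : ReducedExpr n u) (h : StepII u v) :
    ∃ (k : ℕ) (a b : Finset ℕ), Disjoint a b ∧
      names u = (names u).take k ++ [a, b] ++ (names u).drop (k + 2) ∧
      names v = (names u).take k ++ [b, a] ++ (names u).drop (k + 2) :=
  names_stepII_general u v h

end
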